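/- arXiv:2503.18453 — 7 statements merged into one kernel-verified Lean document; each statement's English description precedes it below -/
import Mathlib

section
/- For every integer N ≥ 1, every integer k ≥ 1, and all index tuples i = (i_1,…,i_k), j = (j_1,…,j_k) with entries in {1,…,N}, the average (1/N!)·Σ_{g∈S_N} ∏_{l=1}^{k} g_{i_l j_l} equals 1/(N)_{#Π_i} if the kernel partitions satisfy Π_i = Π_j, and equals 0 otherwise. -/
open Finset

noncomputable section

namespace WgPerm

/-- Number of blocks of the partition of `α` corresponding to the setoid `s`. -/
def numBlocks {α : Type*} (s : Setoid α) : ℕ := Nat.card (Quotient s)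

/-- Number of blocks of `s` contained in the block `B` of `t` (meaningful when `s ≤ t`). -/
def lam {α : Type*} (s t : Setoid α) (B : Quotient t) : ℕ :=
  Nat.card {c : Quotient s // Quotient.mk t (Quotient.out c) = B}

/-- Möbius function of the partition lattice:
`μ(s,t) = ∏_B (−1)^{λ_B−1} (λ_B−1)!` over the blocks `B` of `t`. -/
def mobius {α : Type*} (s t : Setoid α) : ℤ :=
  ∏ᶠ B : Quotient t, (-1 : ℤ) ^ (lam s t B - 1) * (Nat.factorial (lam s t B - 1) : ℤ)

/-- Kernel partition `Π_i` of a tuple `i`. -/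
def kerP {k N : ℕ} (i : Fin k → Fin N) : Setoid (Fin k) := Setoid.ker i

/-- `(i,j)` entry of the permutation matrix of `g`. -/
def permEntry {N : ℕ} (g : Equiv.Perm (Fin N)) (i j : Fin N) : ℝ :=
  if g i = j then 1 else 0

/-- The Weingarten function for the symmetric group `S_N`. -/
def Wg (k N : ℕ) (σ τ : Setoid (Fin k)) : ℝ :=
  ∑ᶠ π ∈ {π : Setoid (Fin k) | π ≤ σ ⊓ τ},
    ((mobius π σ * mobius π τ : ℤ) : ℝ) / (Nat.descFactorial N (numBlocks π) : ℝ)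

/-- `|D(π)|`: the number of singleton blocks of `π`. -/
def numSingletons {k : ℕ} (π : Setoid (Fin k)) : ℕ :=
  Nat.card {j : Fin k | ∀ m, π.r j m → m = j}

/-- The centered Weingarten function for the symmetric group `S_N`. -/
def cWg (k N : ℕ) (σ τ : Setoid (Fin k)) : ℝ :=
  ∑ i ∈ Finset.range (numSingletons (σ ⊔ τ) + 1),
    ((numSingletons (σ ⊔ τ)).choose i : ℝ) * (-1 : ℝ) ^ i *
      ∑ᶠ π ∈ {π : Setoid (Fin k) | π ≤ σ ⊓ τ},
        ((mobius π σ * mobius π τ : ℤ) : ℝ) * ((N : ℝ) ^ i)⁻¹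
          / (Nat.descFactorial N (numBlocks π - i) : ℝ)

/-- `a_k(N) = Σ_{l=0}^{k} binom(k,l)·(−N)^{−(k−l)}/(N)_l`. -/
def aSeq (k N : ℕ) : ℝ :=
  ∑ l ∈ Finset.range (k + 1),
    (k.choose l : ℝ) * ((-(N : ℝ)) ^ (k - l))⁻¹ / (Nat.descFactorial N l : ℝ)


end WgPerm

/-!
The product `∏ l, g_{i_l j_l}` is the indicator of `g ∘ i = j`. Such a `g` exists iff `i` and `j`
have the same kernel, and then the solutions form a left coset of the pointwise stabiliser of
`range i`, which is the symmetric group on the other `N - #Π_i` points. Hence the average is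
`(N - #Π_i)! / N! = 1 / (N)_{#Π_i}`.
-/

open scoped Nat

namespace Equiv.Perm

variable {α ι : Type*}

theorem ker_eq_of_forall_apply_eq {i j : ι → α} {g : Perm α} (h : ∀ l, g (i l) = j l) :
    Setoid.ker i = Setoid.ker j := by
  ext l m
  simp only [Setoid.ker_def, ← h, g.apply_eq_iff_eq]

theorem exists_forall_apply_eq_of_ker_eq [Finite α] {i j : ι → α}
    (h : Setoid.ker i = Setoid.ker j) : ∃ σ : Perm α, ∀ l, σ (i l) = j l := by
  have : Finite (Quotient (Setoid.ker i)) := .of_injective _ (Setoid.kerLift_injective i)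
  let j' : Quotient (Setoid.ker i) → α := Quotient.lift j fun a b hab => by
    rwa [h] at hab
  have hj' : Function.Injective j' := by
    rintro ⟨a⟩ ⟨b⟩ hab
    exact Quotient.sound (h ▸ hab)
  obtain ⟨σ, hσ⟩ := exists_extending_pair _ j' (Setoid.kerLift_injective i) hj'
  exact ⟨σ, fun l => hσ ⟦l⟧⟩

theorem card_forall_apply_eq_eq_card_forall_apply_eq_self {i j : ι → α} {σ : Perm α}
    (hσ : ∀ l, σ (i l) = j l) :
    Nat.card {g : Perm α // ∀ l, g (i l) = j l} =
      Nat.card {g : Perm α // ∀ l, g (i l) = i l} :=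
  Nat.card_congr <| (Equiv.mulLeft σ⁻¹).subtypeEquiv fun g => by
    simp only [← hσ, coe_mulLeft, coe_mul, Function.comp_apply, Perm.inv_eq_iff_eq]

theorem card_forall_apply_eq_self [Finite α] (i : ι → α) :
    Nat.card {g : Perm α // ∀ l, g (i l) = i l} = (Nat.card α - Nat.card (Set.range i))! := by
  classical
  have e : {g : Perm α // ∀ l, g (i l) = i l} ≃ Perm ((Set.range i)ᶜ : Set α) :=
    ((Equiv.subtypeEquivRight fun g => by simp).trans
      (Perm.subtypeEquivSubtypePerm (· ∈ (Set.range i)ᶜ)).symm)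
  rw [Nat.card_congr e, Nat.card_perm, Nat.card_coe_set_eq, Set.ncard_compl,
    Nat.card_coe_set_eq]

end Equiv.Perm

namespace WgPerm

theorem sum_prod_permEntry_eq_card {N : ℕ} {ι : Type*} [Fintype ι] (i j : ι → Fin N) :
    ∑ g : Equiv.Perm (Fin N), ∏ l, permEntry g (i l) (j l) =
      Nat.card {g : Equiv.Perm (Fin N) // ∀ l, g (i l) = j l} := by
  classical
  simp only [permEntry, Fintype.prod_boole, Finset.sum_boole, Nat.card_eq_fintype_card,
    Fintype.card_subtype]

theorem numBlocks_kerP {k N : ℕ} (i : Fin k → Fin N) :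
    numBlocks (kerP i) = Nat.card (Set.range i) :=
  Nat.card_congr (Setoid.quotientKerEquivRange i)

theorem factorial_sub_div_factorial {N r : ℕ} (h : r ≤ N) :
    ((N - r)! : ℝ) / N ! = (N.descFactorial r : ℝ)⁻¹ := by
  rw [← Nat.factorial_mul_descFactorial h, Nat.cast_mul,
    div_mul_cancel_left₀ (by positivity)]

open Classical in
theorem stmt0_general (N k : ℕ) (i j : Fin k → Fin N) :
    (1 / (Nat.factorial N : ℝ)) *
        ∑ g : Equiv.Perm (Fin N), ∏ l : Fin k, permEntry g (i l) (j l) =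
      if kerP i = kerP j then
        ((Nat.descFactorial N (numBlocks (kerP i)) : ℝ))⁻¹
      else 0 := by
  rw [sum_prod_permEntry_eq_card, one_div_mul_eq_div]
  split_ifs with h
  · obtain ⟨σ, hσ⟩ := Equiv.Perm.exists_forall_apply_eq_of_ker_eq h
    have hr : Nat.card (Set.range i) ≤ N :=
      (Finite.card_subtype_le (· ∈ Set.range i)).trans_eq (Nat.card_fin N)
    rw [Equiv.Perm.card_forall_apply_eq_eq_card_forall_apply_eq_self hσ, Equiv.Perm.card_forall_apply_eq_self,
      Nat.card_fin, numBlocks_kerP, factorial_sub_div_factorial hr]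
  · have : IsEmpty {g : Equiv.Perm (Fin N) // ∀ l, g (i l) = j l} :=
      ⟨fun g => h (Equiv.Perm.ker_eq_of_forall_apply_eq g.2)⟩
    simp

open Classical in
/-- moments of random permutation matrix entries. -/
theorem stmt0 (N k : ℕ) (hN : 1 ≤ N) (hk : 1 ≤ k) (i j : Fin k → Fin N) :
    (1 / (Nat.factorial N : ℝ)) *
        ∑ g : Equiv.Perm (Fin N), ∏ l : Fin k, permEntry g (i l) (j l) =
      if kerP i = kerP j then
        ((Nat.descFactorial N (numBlocks (kerP i)) : ℝ))⁻¹
      else 0 :=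
  stmt0_general N k i j

end WgPerm

end
end

section
/- For every integer k ≥ 1, every integer N ≥ k, and all index tuples i = (i_1,…,i_k), j = (j_1,…,j_k) with entries in {1,…,N}, one has (1/N!)·Σ_{g∈S_N} ∏_{l=1}^{k} g_{i_l j_l} = Σ_{σ,τ ∈ P(k), σ ≤ Π_i, τ ≤ Π_j} Wg_k(σ,τ,N). -/
/-!
Both sides vanish unless `Π_i = Π_j`. Exchanging the order of summation, the right-hand side is
`∑_π (∑_{π ≤ σ ≤ Π_i} μ(π, σ)) (∑_{π ≤ τ ≤ Π_j} μ(π, τ)) / (N)_{#π}`, and each inner sum is a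
Kronecker delta, so it equals `[Π_i = Π_j] / (N)_{#Π_i}`. On the left, the permutations with
`g (i l) = j l` for all `l` exist only when `Π_i = Π_j`, and then form a coset of the pointwise
stabiliser of the range of `i`, of size `(N - #Π_i)!`.

The Möbius identity is proved for the explicit product formula. The partitions `σ` between `π`
and `ρ` are the partitions of `α ⧸ π` whose blocks lie in fibres of `α ⧸ π → α ⧸ ρ`; one inducts
on the ground set by removing the block containing a fixed point `a`. The only surviving terms
are the whole class `T` of `a` and `T` minus one point, and they cancel because
`(-1)^(t-1) (t-1)! + (t-1) (-1)^(t-2) (t-2)! = 0`.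
-/

open Finset

noncomputable section

namespace WgPerm

/-- The factor contributed to `mobius π σ` by a block of `σ` made of `n` blocks of `π`. -/
def mobiusFactor (n : ℕ) : ℤ := (-1) ^ (n - 1) * (n - 1).factorial

lemma mobiusFactor_one : mobiusFactor 1 = 1 := by simp [mobiusFactor]

lemma mobiusFactor_add_two (n : ℕ) :
    mobiusFactor (n + 2) + (n + 1 : ℕ) * mobiusFactor (n + 1) = 0 := by
  simp only [mobiusFactor, Nat.add_sub_cancel, show n + 2 - 1 = n + 1 by omega,
    Nat.factorial_succ, pow_succ]
  push_cast
  ring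

section Finpartition

variable {Q β : Type*} [DecidableEq β]

def blockWeight (c : Q → β) (A : Finset Q) : ℤ :=
  if ∀ q ∈ A, ∀ q' ∈ A, c q = c q' then mobiusFactor #A else 0

lemma prod_blockWeight (c : Q → β) (ps : Finset (Finset Q)) :
    ∏ A ∈ ps, blockWeight c A =
      if ∀ A ∈ ps, ∀ q ∈ A, ∀ q' ∈ A, c q = c q' then ∏ A ∈ ps, mobiusFactor #A else 0 := by
  unfold blockWeight
  convert prod_ite_zero

variable [DecidableEq Q]

lemma blockWeight_eq_ite {c : Q → β} {s A : Finset Q} {a : Q} (hAs : A ⊆ s) (haA : a ∈ A) :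
    blockWeight c A = if A ⊆ s.filter (c · = c a) then mobiusFactor #A else 0 := by
  refine if_congr ⟨fun h q hq => mem_filter.2 ⟨hAs hq, h q hq a haA ▸ rfl⟩,
    fun h q hq q' hq' => ?_⟩ rfl rfl
  exact (mem_filter.1 (h hq)).2.trans (mem_filter.1 (h hq')).2.symm

lemma _root_.Finpartition.parts_avoid_of_mem {s A : Finset Q} (P : Finpartition s)
    (hA : A ∈ P.parts) :
    (P.avoid A).parts = P.parts.erase A := by
  ext c
  rw [Finpartition.mem_avoid, mem_erase]
  constructor
  · rintro ⟨d, hd, hdA, rfl⟩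
    have hne : d ≠ A := by rintro rfl; exact hdA le_rfl
    have hdisj : Disjoint d A := P.disjoint hd hA hne
    rw [sdiff_eq_self_of_disjoint hdisj]
    exact ⟨hne, hd⟩
  · rintro ⟨hne, hc⟩
    have hdisj : Disjoint c A := P.disjoint hc hA hne
    exact ⟨c, hc, fun hle => P.ne_bot hc (hdisj.eq_bot_of_le hle),
      sdiff_eq_self_of_disjoint hdisj⟩

/-- Removing the part `A` is a bijection from the partitions of `s` in which `a` lies in `A`
onto the partitions of `s \ A`. -/
lemma sum_finpartition_filter_part_eq {M : Type*} [AddCommMonoid M] (F : Finset (Finset Q) → M)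
    {s A : Finset Q} {a : Q} (haA : a ∈ A) (hAs : A ⊆ s) :
    ∑ P : Finpartition s with P.part a = A, F P.parts =
      ∑ P : Finpartition (s \ A), F (insert A P.parts) := by
  have hA : A ≠ ⊥ := ne_empty_of_mem haA
  have hsup : (s \ A) ⊔ A = s := sdiff_union_of_subset hAs
  have hA_notMem (P : Finpartition (s \ A)) : A ∉ P.parts := fun h => by
    simpa [haA] using P.le h haA
  have hA_mem {P : Finpartition s} (hP : P ∈ univ.filter (·.part a = A)) : A ∈ P.parts :=
    (mem_filter.1 hP).2 ▸ P.part_mem.2 (hAs haA)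
  refine sum_nbij' (·.avoid A) (·.extend hA sdiff_disjoint hsup) (fun _ _ => mem_univ _)
    (fun P _ => mem_filter.2 ⟨mem_univ _, Finpartition.part_eq_of_mem _ (by simp) haA⟩)
    (fun P hP => ?_) (fun P _ => ?_) (fun P hP => ?_)
  · ext1
    rw [Finpartition.extend_parts, P.parts_avoid_of_mem (hA_mem hP), insert_erase (hA_mem hP)]
  · ext1
    rw [Finpartition.parts_avoid_of_mem _ (by simp), Finpartition.extend_parts,
      erase_insert (hA_notMem P)]
  · rw [P.parts_avoid_of_mem (hA_mem hP), insert_erase (hA_mem hP)]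

lemma sum_finpartition_eq_sum_sum_insert {M : Type*} [AddCommMonoid M] (F : Finset (Finset Q) → M)
    {s : Finset Q} {a : Q} (ha : a ∈ s) :
    ∑ P : Finpartition s, F P.parts =
      ∑ A ∈ s.powerset with a ∈ A, ∑ P : Finpartition (s \ A), F (insert A P.parts) := by
  rw [← sum_fiberwise_of_maps_to (t := s.powerset.filter (a ∈ ·))
    (g := fun P : Finpartition s => P.part a) fun P _ => by
    simp [P.part_subset a, P.mem_part ha]]
  refine sum_congr rfl fun A hA => ?_
  rw [mem_filter, mem_powerset] at hA
  exact sum_finpartition_filter_part_eq F hA.2 hA.1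

lemma injOn_sdiff_iff {c : Q → β} {s B : Finset Q} {b : β} (hB : B ⊆ s.filter (c · = b)) :
    Set.InjOn c ↑(s \ B) ↔
      Set.InjOn c ↑(s \ s.filter (c · = b)) ∧ #(s.filter (c · = b) \ B) ≤ 1 := by
  set T := s.filter (c · = b)
  have hconst : ∀ q ∈ T \ B, c q = b := fun q hq => (mem_filter.1 (mem_sdiff.1 hq).1).2
  have hsplit : (↑(s \ B) : Set Q) = ↑(s \ T) ∪ ↑(T \ B) := by
    ext q
    have := @hB q
    simp only [coe_sdiff, Set.mem_union, Set.mem_sdiff, mem_coe, T, mem_filter] at this ⊢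
    tauto
  have hdisj : Disjoint (↑(s \ T) : Set Q) ↑(T \ B) :=
    disjoint_coe.2 (sdiff_disjoint.mono_right sdiff_subset)
  have hcross : ∀ x ∈ (↑(s \ T) : Set Q), ∀ y ∈ (↑(T \ B) : Set Q), c x ≠ c y := by
    intro x hx y hy hxy
    simp only [coe_sdiff, Set.mem_sdiff, mem_coe, T, mem_filter, not_and] at hx
    exact hx.2 hx.1 (hxy.trans (hconst y hy))
  have hinj : Set.InjOn c ↑(T \ B) ↔ #(T \ B) ≤ 1 := by
    rw [card_le_one]
    exact ⟨fun h x hx y hy => h hx hy ((hconst x hx).trans (hconst y hy).symm),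
      fun h x hx y hy _ => h x hx y hy⟩
  rw [hsplit, Set.injOn_union hdisj, hinj]
  exact ⟨fun h => ⟨h.1, h.2.1⟩, fun h => ⟨h.1, h.2, hcross⟩⟩

lemma sum_mobiusFactor_card_sdiff_le_one {T : Finset Q} {a : Q} (ha : a ∈ T) :
    ∑ A ∈ T.powerset with a ∈ A ∧ #(T \ A) ≤ 1, mobiusFactor #A =
      if #T = 1 then 1 else 0 := by
  have hset : T.powerset.filter (fun A => a ∈ A ∧ #(T \ A) ≤ 1) =
      insert T ((T.erase a).image T.erase) := by
    ext A
    simp only [mem_filter, mem_powerset, mem_insert, mem_image, mem_erase]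
    constructor
    · rintro ⟨hAT, haA, hcard⟩
      rcases Nat.le_one_iff_eq_zero_or_eq_one.1 hcard with h0 | h1
      · exact .inl (hAT.antisymm (sdiff_eq_empty_iff_subset.1 (card_eq_zero.1 h0)))
      · obtain ⟨x, hx⟩ := card_eq_one.1 h1
        have hxT : x ∈ T \ A := hx ▸ mem_singleton_self x
        refine .inr ⟨x, ⟨fun hxa => (mem_sdiff.1 hxT).2 (hxa ▸ haA), (mem_sdiff.1 hxT).1⟩, ?_⟩
        rw [erase_eq, ← hx, Finset.sdiff_sdiff_eq_self hAT]
    · rintro (rfl | ⟨x, ⟨hxa, hxT⟩, rfl⟩)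
      · simp [ha]
      · simp [erase_subset, Ne.symm hxa, ha, sdiff_erase_self hxT]
  have hT : T ∉ (T.erase a).image T.erase := by
    simp only [mem_image, mem_erase, erase_eq_self]
    rintro ⟨x, ⟨-, hxT⟩, hx⟩
    exact hx hxT
  rw [hset, sum_insert hT, sum_image fun x hx y hy => erase_injOn T (mem_of_mem_erase hx)
    (mem_of_mem_erase hy), sum_congr rfl fun x hx => by
      rw [card_erase_of_mem (mem_of_mem_erase hx)], sum_const, card_erase_of_mem ha, nsmul_eq_mul]
  obtain ⟨n, hn⟩ : ∃ n, #T = n + 1 := ⟨#T - 1, by have := card_pos.2 ⟨a, ha⟩; omega⟩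
  rcases n with _ | n
  · simp [hn, mobiusFactor_one]
  · rw [hn, if_neg (by omega), Nat.add_sub_cancel]
    exact mobiusFactor_add_two n

/-- For `c = blockMap π ρ` on `α ⧸ π` this is `∑_{π ≤ σ ≤ ρ} μ(π, σ) = δ(π, ρ)`, see
`sum_mobius_Icc_eq_sum_finpartition`. -/
theorem sum_finpartition_prod_blockWeight (c : Q → β) (s : Finset Q) :
    ∑ P : Finpartition s, ∏ A ∈ P.parts, blockWeight c A = if Set.InjOn c s then 1 else 0 := by
  induction s using Finset.strongInduction with
  | H s ih =>
  rcases s.eq_empty_or_nonempty with rfl | ⟨a, ha⟩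
  · have : Unique (Finpartition (∅ : Finset Q)) :=
      inferInstanceAs (Unique (Finpartition (⊥ : Finset Q)))
    rw [Fintype.sum_unique, Finpartition.parts_eq_empty_iff.2 rfl]
    simp
  set T := s.filter (c · = c a) with hT
  have haT : a ∈ T := mem_filter.2 ⟨ha, rfl⟩
  calc ∑ P : Finpartition s, ∏ A ∈ P.parts, blockWeight c A
      = ∑ A ∈ s.powerset with a ∈ A,
          blockWeight c A * if Set.InjOn c ↑(s \ A) then 1 else 0 := by
        rw [sum_finpartition_eq_sum_sum_insert (fun ps => ∏ A ∈ ps, blockWeight c A) ha]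
        refine sum_congr rfl fun A hA => ?_
        obtain ⟨hAs, haA⟩ : A ⊆ s ∧ a ∈ A := by simpa using hA
        rw [← ih _ (sdiff_ssubset hAs ⟨a, haA⟩), mul_sum]
        exact sum_congr rfl fun P _ => prod_insert fun h => by simpa [haA] using P.le h haA
    _ = ∑ A ∈ T.powerset with a ∈ A ∧ #(T \ A) ≤ 1,
          mobiusFactor #A * if Set.InjOn c ↑(s \ T) then 1 else 0 := by
        refine (sum_subset_zero_on_sdiff (fun A hA => ?_) (fun A hA => ?_) fun A hA => ?_).symm
        · obtain ⟨hAT, haA, -⟩ : A ⊆ T ∧ a ∈ A ∧ _ := by simpa using hA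
          simpa [haA] using hAT.trans (filter_subset _ s)
        · obtain ⟨⟨hAs, haA⟩, hA'⟩ : (A ⊆ s ∧ a ∈ A) ∧ _ := by simpa using hA
          rw [blockWeight_eq_ite hAs haA]
          split_ifs with hAT hinj <;> try simp
          exact absurd ((injOn_sdiff_iff hAT).1 hinj).2 (not_le.2 (hA' hAT haA))
        · obtain ⟨hAT, haA, hcard⟩ : A ⊆ T ∧ a ∈ A ∧ #(T \ A) ≤ 1 := by simpa using hA
          simp only [blockWeight_eq_ite (hAT.trans (filter_subset _ s)) haA, ← hT, if_pos hAT,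
            injOn_sdiff_iff hAT, hcard, and_true]
    _ = if Set.InjOn c s then 1 else 0 := by
        have hinj := injOn_sdiff_iff (c := c) (s := s) (b := c a) (empty_subset _)
        rw [sdiff_empty, sdiff_empty] at hinj
        have hT1 : #T ≤ 1 ↔ #T = 1 := by have := card_pos.2 ⟨a, haT⟩; omega
        simp only [← sum_mul, sum_mobiusFactor_card_sdiff_le_one haT, ← hT, hinj, hT1]
        split_ifs <;> simp_all

end Finpartition

section SetoidPartition

variable {Q : Type*} [Fintype Q] [DecidableEq Q]

lemma _root_.Finpartition.ofSetoid_eq_of_rel_iff (s : Setoid Q) [DecidableRel s]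
    (P : Finpartition (univ : Finset Q)) (h : ∀ a b, s a b ↔ P.part a = P.part b) :
    Finpartition.ofSetoid s = P := by
  ext A
  have hpart (a : Q) : ({b | s a b} : Finset Q) = P.part a := by
    ext b
    simp [h, P.mem_part_iff_part_eq_part (mem_univ b) (mem_univ a), eq_comm]
  simp only [Finpartition.ofSetoid, Finpartition.ofSetSetoid_parts, hpart, mem_image, mem_univ,
    true_and]
  exact ⟨fun ⟨a, ha⟩ => ha ▸ P.part_mem.2 (mem_univ a), fun hA =>
    let ⟨a, ha⟩ := P.nonempty_of_mem_parts hA; ⟨a, P.part_eq_of_mem hA ha⟩⟩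

lemma _root_.Finpartition.rel_of_mem_parts_ofSetoid {s : Setoid Q} [DecidableRel s]
    {A : Finset Q} (hA : A ∈ (Finpartition.ofSetoid s).parts) {a b : Q} (ha : a ∈ A)
    (hb : b ∈ A) : s a b :=
  Finpartition.mem_part_ofSetoid_iff_rel.1 (Finpartition.part_eq_of_mem _ hA ha ▸ hb)

lemma prod_parts_ofSetoid_ker {β M : Type*} [Fintype β] [DecidableEq β] [CommMonoid M]
    {φ : Q → β} [DecidableRel (Setoid.ker φ)] (hφ : Function.Surjective φ) (g : Finset Q → M) :
    ∏ A ∈ (Finpartition.ofSetoid (Setoid.ker φ)).parts, g A = ∏ b, g {q | φ q = b} := by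
  have hparts : (Finpartition.ofSetoid (Setoid.ker φ)).parts =
      univ.image fun b => ({q | φ q = b} : Finset Q) := by
    ext A
    simp only [Finpartition.ofSetoid, Finpartition.ofSetSetoid_parts, mem_image, mem_univ,
      true_and, Setoid.ker_def]
    constructor
    · rintro ⟨a, rfl⟩
      exact ⟨φ a, by simp [eq_comm]⟩
    · rintro ⟨b, rfl⟩
      obtain ⟨a, rfl⟩ := hφ b
      exact ⟨a, by simp [eq_comm]⟩
  rw [hparts, prod_image fun b _ b' _ hbb' => ?_]
  obtain ⟨q, rfl⟩ := hφ b
  simpa using (Finset.ext_iff.1 hbb' q).1 (by simp)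

end SetoidPartition

section BlockMap

variable {α : Type*} {π σ ρ : Setoid α}

/-- For `π ≤ σ` this is the canonical map `α ⧸ π → α ⧸ σ`; defining it through `Quotient.out`
makes it total, and its fibres are exactly the sets counted by `lam π σ`. -/
def blockMap (π σ : Setoid α) (q : Quotient π) : Quotient σ := Quotient.mk σ q.out

lemma blockMap_mk (h : π ≤ σ) (a : α) : blockMap π σ (Quotient.mk π a) = Quotient.mk σ a :=
  Quotient.sound (h (Quotient.mk_out a))

lemma blockMap_surjective (h : π ≤ σ) : Function.Surjective (blockMap π σ) :=
  fun B => B.inductionOn fun a => ⟨Quotient.mk π a, blockMap_mk h a⟩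

lemma blockMap_mk_eq_iff (h : π ≤ σ) {a b : α} :
    blockMap π σ (Quotient.mk π a) = blockMap π σ (Quotient.mk π b) ↔ σ a b := by
  rw [blockMap_mk h, blockMap_mk h, Quotient.eq]

lemma blockMap_eq_of_le (hπσ : π ≤ σ) (hσρ : σ ≤ ρ) {q q' : Quotient π}
    (h : blockMap π σ q = blockMap π σ q') : blockMap π ρ q = blockMap π ρ q' := by
  induction q, q' using Quotient.inductionOn₂
  rw [blockMap_mk_eq_iff hπσ] at h
  exact (blockMap_mk_eq_iff (hπσ.trans hσρ)).2 (hσρ h)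

lemma blockMap_injective_iff (h : π ≤ ρ) : Function.Injective (blockMap π ρ) ↔ π = ρ := by
  refine ⟨fun hinj => h.antisymm fun a b hab => ?_, ?_⟩
  · exact Quotient.exact (hinj ((blockMap_mk_eq_iff h).2 hab))
  · rintro rfl q q' hq
    simpa [blockMap] using hq

open scoped Classical in
lemma mobius_eq_prod_blockMap [Fintype α] (π σ : Setoid α) :
    mobius π σ = ∏ B : Quotient σ, mobiusFactor #{q | blockMap π σ q = B} := by
  rw [mobius, finprod_eq_prod_of_fintype]
  refine prod_congr rfl fun B _ => ?_
  rw [lam, Nat.card_eq_fintype_card, Fintype.card_subtype]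
  rfl

end BlockMap

section MobiusIdentity

open scoped Classical

variable {α : Type*} [Fintype α]

instance : Finite (Setoid α) :=
  Finite.of_injective (fun s : Setoid α => s.r) fun _ _ h =>
    Setoid.ext fun a b => Iff.of_eq (congrFun (congrFun h a) b)

instance : Fintype (Setoid α) := Fintype.ofFinite _

/-- The partitions `σ` of `α` with `π ≤ σ ≤ ρ` correspond to the partitions of `α ⧸ π` into
blocks on which `blockMap π ρ` is constant, with `mobius π σ` the product of the block factors. -/
lemma sum_mobius_Icc_eq_sum_finpartition {π ρ : Setoid α} (hπρ : π ≤ ρ) :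
    ∑ σ with π ≤ σ ∧ σ ≤ ρ, mobius π σ =
      ∑ P : Finpartition (univ : Finset (Quotient π)),
        ∏ A ∈ P.parts, blockWeight (blockMap π ρ) A := by
  set Compatible := fun P : Finpartition (univ : Finset (Quotient π)) =>
    ∀ A ∈ P.parts, ∀ q ∈ A, ∀ q' ∈ A, blockMap π ρ q = blockMap π ρ q'
  have hcompat {σ : Setoid α} (hπσ : π ≤ σ) (hσρ : σ ≤ ρ) :
      Compatible (Finpartition.ofSetoid (Setoid.ker (blockMap π σ))) := fun A hA q hq q' hq' =>
    blockMap_eq_of_le hπσ hσρ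
      (Setoid.ker_def.1 (Finpartition.rel_of_mem_parts_ofSetoid hA hq hq'))
  rw [← sum_filter_of_ne (p := Compatible) fun P _ hP => ?_]
  swap
  · by_contra h
    rw [prod_blockWeight, if_neg h] at hP
    exact hP rfl
  refine sum_nbij' (fun σ => Finpartition.ofSetoid (Setoid.ker (blockMap π σ)))
    (fun P => Setoid.ker (P.part ∘ Quotient.mk π)) (fun σ hσ => ?_) (fun P hP => ?_)
    (fun σ hσ => ?_) (fun P hP => ?_) (fun σ hσ => ?_)
  · obtain ⟨hπσ, hσρ⟩ : π ≤ σ ∧ σ ≤ ρ := by simpa using hσ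
    simpa using hcompat hπσ hσρ
  · simp only [mem_filter, mem_univ, true_and] at hP ⊢
    refine ⟨fun a b hab => congrArg P.part (Quotient.sound hab), fun a b hab => ?_⟩
    have hb : Quotient.mk π b ∈ P.part (Quotient.mk π a) := by
      rw [show P.part (Quotient.mk π a) = P.part (Quotient.mk π b) from hab]
      exact P.mem_part (mem_univ _)
    exact (blockMap_mk_eq_iff hπρ).1
      (hP _ (P.part_mem.2 (mem_univ _)) _ (P.mem_part (mem_univ _)) _ hb)
  · obtain ⟨hπσ, -⟩ : π ≤ σ ∧ σ ≤ ρ := by simpa using hσ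
    ext a b
    rw [Setoid.ker_def, Function.comp_apply, Function.comp_apply,
      ← Finpartition.mem_part_iff_part_eq_part _ (mem_univ _) (mem_univ _),
      Finpartition.mem_part_ofSetoid_iff_rel, Setoid.ker_def, blockMap_mk_eq_iff hπσ]
    exact ⟨σ.symm, σ.symm⟩
  · refine Finpartition.ofSetoid_eq_of_rel_iff _ P fun q q' => ?_
    rw [Setoid.ker_def, blockMap, blockMap, Quotient.eq, Setoid.ker_def, Function.comp_apply,
      Function.comp_apply, Quotient.out_eq, Quotient.out_eq]
  · obtain ⟨hπσ, hσρ⟩ : π ≤ σ ∧ σ ≤ ρ := by simpa using hσ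
    rw [prod_blockWeight, if_pos (hcompat hπσ hσρ), mobius_eq_prod_blockMap]
    exact (prod_parts_ofSetoid_ker (blockMap_surjective hπσ) (mobiusFactor ∘ card)).symm

theorem sum_mobius_Icc (π ρ : Setoid α) :
    ∑ σ with π ≤ σ ∧ σ ≤ ρ, mobius π σ = if π = ρ then 1 else 0 := by
  by_cases hπρ : π ≤ ρ
  · rw [sum_mobius_Icc_eq_sum_finpartition hπρ, sum_finpartition_prod_blockWeight]
    simp only [coe_univ, Set.injOn_univ, blockMap_injective_iff hπρ]
  · rw [if_neg (by rintro rfl; exact hπρ le_rfl)]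
    exact sum_eq_zero fun σ hσ => (hπρ ((mem_filter.1 hσ).2.1.trans (mem_filter.1 hσ).2.2)).elim

theorem sum_sum_sum_mobius_mul_mobius {R : Type*} [CommRing R] (ρ ρ' : Setoid α)
    (F : Setoid α → R) :
    ∑ σ with σ ≤ ρ, ∑ τ with τ ≤ ρ', ∑ π with π ≤ σ ⊓ τ,
        ((mobius π σ * mobius π τ : ℤ) : R) * F π =
      if ρ = ρ' then F ρ else 0 := by
  calc _ = ∑ σ with σ ≤ ρ, ∑ π with π ≤ σ, ∑ τ with π ≤ τ ∧ τ ≤ ρ',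
          ((mobius π σ * mobius π τ : ℤ) : R) * F π :=
        sum_congr rfl fun σ _ => sum_comm' fun τ π => by simp [le_inf_iff]; tauto
    _ = ∑ π, ∑ σ with π ≤ σ ∧ σ ≤ ρ, ∑ τ with π ≤ τ ∧ τ ≤ ρ',
          ((mobius π σ * mobius π τ : ℤ) : R) * F π :=
        sum_comm' fun σ π => by simp; tauto
    _ = ∑ π, ((∑ σ with π ≤ σ ∧ σ ≤ ρ, mobius π σ) *
          (∑ τ with π ≤ τ ∧ τ ≤ ρ', mobius π τ) : ℤ) * F π := by
        refine sum_congr rfl fun π _ => ?_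
        rw [Int.cast_mul, Int.cast_sum, Int.cast_sum, sum_mul_sum, sum_mul]
        simp only [Int.cast_mul, sum_mul]
    _ = if ρ = ρ' then F ρ else 0 := by
        simp only [sum_mobius_Icc]
        split_ifs with h
        · subst h; simp
        · refine sum_eq_zero fun π _ => ?_
          split_ifs <;> simp_all

end MobiusIdentity

section PermutationCount

variable {α ι : Type*}

lemma ker_eq_of_perm_apply_eq {i j : ι → α} (g : Equiv.Perm α) (h : ∀ l, g (i l) = j l) :
    Setoid.ker i = Setoid.ker j :=
  Setoid.ext fun a b => by simp only [Setoid.ker_def, ← h, g.apply_eq_iff_eq]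

lemma exists_perm_apply_eq_of_ker_eq [Finite α] {i j : ι → α}
    (h : Setoid.ker i = Setoid.ker j) :
    ∃ g₀ : Equiv.Perm α, ∀ l, g₀ (i l) = j l := by
  have hij (a b : ι) : i a = i b ↔ j a = j b := by
    rw [← Setoid.ker_def, ← Setoid.ker_def, h]
  have : Finite (Quotient (Setoid.ker i)) := .of_injective _ (Setoid.kerLift_injective i)
  obtain ⟨g₀, hg₀⟩ := Equiv.Perm.exists_extending_pair (Setoid.kerLift i)
    (Quotient.lift j fun a b hab => (hij a b).1 hab) (Setoid.kerLift_injective i)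
    fun x y => Quotient.inductionOn₂ x y fun a b hab => Quotient.sound ((hij a b).2 hab)
  exact ⟨g₀, fun l => hg₀ (Quotient.mk _ l)⟩

lemma numBlocks_ker (i : ι → α) : numBlocks (Setoid.ker i) = Nat.card (Set.range i) :=
  Nat.card_congr (Setoid.quotientKerEquivRange i)

lemma numBlocks_ker_le [Finite α] (i : ι → α) : numBlocks (Setoid.ker i) ≤ Nat.card α :=
  numBlocks_ker i ▸ Finite.card_subtype_le _

/-- Once one permutation `g₀` carries `i` to `j`, the others are `g₀ ∘ f` with `f` fixing the
range of `i` pointwise, i.e. a permutation of its complement. -/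
theorem card_perm_apply_eq_of_ker_eq [Finite α] {i j : ι → α}
    (h : Setoid.ker i = Setoid.ker j) :
    Nat.card {g : Equiv.Perm α // ∀ l, g (i l) = j l} =
      (Nat.card α - numBlocks (Setoid.ker i)).factorial := by
  classical
  obtain ⟨g₀, hg₀⟩ := exists_perm_apply_eq_of_ker_eq h
  have hfix : {g : Equiv.Perm α // ∀ l, g (i l) = j l} ≃
      {f : Equiv.Perm α // ∀ a, ¬ a ∉ Set.range i → f a = a} :=
    (Equiv.mulLeft g₀⁻¹).subtypeEquiv fun g => by
      simp [← hg₀, Equiv.eq_symm_apply, eq_comm]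
  rw [Nat.card_congr (hfix.trans (Equiv.Perm.subtypeEquivSubtypePerm _).symm), Nat.card_perm,
    numBlocks_ker, Nat.card_coe_set_eq (Set.range i), ← Set.ncard_compl,
    ← Nat.card_coe_set_eq]
  rfl

end PermutationCount

lemma finsum_mem_setOf_eq_sum_filter {ι M : Type*} [Fintype ι] [AddCommMonoid M] (p : ι → Prop)
    [DecidablePred p] (f : ι → M) : ∑ᶠ x ∈ {x | p x}, f x = ∑ x with p x, f x := by
  rw [← finsum_mem_coe_finset, coe_filter]
  simp

lemma sum_prod_permEntry {k N : ℕ} (i j : Fin k → Fin N) :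
    ∑ g : Equiv.Perm (Fin N), ∏ l : Fin k, permEntry g (i l) (j l) =
      Nat.card {g : Equiv.Perm (Fin N) // ∀ l, g (i l) = j l} := by
  simp [permEntry, prod_boole, sum_boole, Nat.card_eq_fintype_card, Fintype.card_subtype]

theorem stmt1_general (k N : ℕ) (i j : Fin k → Fin N) :
    (1 / (Nat.factorial N : ℝ)) *
        ∑ g : Equiv.Perm (Fin N), ∏ l : Fin k, permEntry g (i l) (j l) =
      ∑ᶠ σ ∈ {σ : Setoid (Fin k) | σ ≤ kerP i},
        ∑ᶠ τ ∈ {τ : Setoid (Fin k) | τ ≤ kerP j}, Wg k N σ τ := by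
  classical
  simp only [Wg, kerP, finsum_mem_setOf_eq_sum_filter, div_eq_mul_inv]
  rw [sum_prod_permEntry, sum_sum_sum_mobius_mul_mobius]
  by_cases h : Setoid.ker i = Setoid.ker j
  · have hr : numBlocks (Setoid.ker i) ≤ N := by simpa using numBlocks_ker_le i
    rw [if_pos h, card_perm_apply_eq_of_ker_eq h, Nat.card_eq_fintype_card, Fintype.card_fin,
      ← Nat.factorial_mul_descFactorial hr]
    push_cast
    field_simp
  · have : IsEmpty {g : Equiv.Perm (Fin N) // ∀ l, g (i l) = j l} :=
      ⟨fun g => h (ker_eq_of_perm_apply_eq g.1 g.2)⟩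
    rw [if_neg h, Nat.card_of_isEmpty, Nat.cast_zero, mul_zero]

/-- the Weingarten formula for random permutation matrices. -/
theorem stmt1 (k N : ℕ) (hk : 1 ≤ k) (hN : k ≤ N) (i j : Fin k → Fin N) :
    (1 / (Nat.factorial N : ℝ)) *
        ∑ g : Equiv.Perm (Fin N), ∏ l : Fin k, permEntry g (i l) (j l) =
      ∑ᶠ σ ∈ {σ : Setoid (Fin k) | σ ≤ kerP i},
        ∑ᶠ τ ∈ {τ : Setoid (Fin k) | τ ≤ kerP j}, Wg k N σ τ :=
  stmt1_general k N i j

end WgPerm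

end
end

section
/- Fix an integer k ≥ 1 and σ,τ ∈ P(k). Then there exists a constant C > 0 such that for every integer N ≥ k, |Wg_k(σ,τ,N) − μ(σ∧τ,σ)·μ(σ∧τ,τ)·N^{−#(σ∧τ)}| ≤ C·N^{−#(σ∧τ)−1}; in particular N^{#(σ∧τ)}·Wg_k(σ,τ,N) converges to μ(σ∧τ,σ)·μ(σ∧τ,τ) as N → ∞. -/
/-!
`Wg k N σ τ` is a finite sum of terms `μ(π,σ) μ(π,τ) / (N)_{#π}` over `π ≤ σ ⊓ τ`. Since
`(N)_n = N^n (1 + O(1/N))` for fixed `n`, each term is `O(N^{-#π})`, and `σ ⊓ τ` is the only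
`π` in the range with the minimal number of blocks: a strict refinement has strictly more blocks.
Hence the term `π = σ ⊓ τ` gives the leading order `N^{-#(σ ⊓ τ)}` and all the rest is
`O(N^{-#(σ ⊓ τ) - 1})`.
-/

open Finset

noncomputable section

open Filter Topology

theorem Nat.pow_le_pow_mul_descFactorial {n N : ℕ} (h : n ≤ N) :
    N ^ n ≤ n ^ n * N.descFactorial n := by
  rcases n.eq_zero_or_pos with rfl | hn
  · simp
  have hN : N ≤ n * (N + 1 - n) := by
    obtain ⟨d, rfl⟩ := Nat.exists_eq_add_of_le h
    rw [show n + d + 1 - n = d + 1 by omega]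
    nlinarith
  calc N ^ n ≤ (n * (N + 1 - n)) ^ n := Nat.pow_le_pow_left hN n
    _ = n ^ n * (N + 1 - n) ^ n := mul_pow ..
    _ ≤ n ^ n * N.descFactorial n := Nat.mul_le_mul_left _ (N.pow_sub_le_descFactorial n)

theorem Nat.mul_pow_le_mul_descFactorial_add {m N : ℕ} (h : m ≤ N) :
    N * N ^ m ≤ N * N.descFactorial m + m ^ 2 * N ^ m := by
  induction m with
  | zero => simp
  | succ m ih =>
    have hrec : N * N.descFactorial m = N.descFactorial (m + 1) + m * N.descFactorial m := by
      rw [Nat.descFactorial_succ, ← add_mul, Nat.sub_add_cancel (by omega)]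
    have h1 := Nat.mul_le_mul_left N (ih (by omega))
    have h2 := Nat.mul_le_mul_left (m * N) (N.descFactorial_le_pow m)
    have hpow : N ^ (m + 1) = N * N ^ m := Nat.pow_succ'
    calc N * N ^ (m + 1) ≤ N * (N * N.descFactorial m + m ^ 2 * N ^ m) := by rwa [hpow]
      _ = N * N.descFactorial (m + 1) + m * N * N.descFactorial m + m ^ 2 * N ^ (m + 1) := by
          rw [hpow, mul_add, ← mul_assoc, mul_comm N N, mul_assoc, hrec]; ring
      _ ≤ N * N.descFactorial (m + 1) + (m + 1) ^ 2 * N ^ (m + 1) := by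
          rw [hpow]; nlinarith [Nat.zero_le (N * N ^ m)]

theorem abs_inv_descFactorial_sub_inv_pow_le {m N : ℕ} (h : m ≤ N) :
    |((N.descFactorial m : ℝ))⁻¹ - ((N : ℝ) ^ m)⁻¹| ≤ m ^ (m + 2) * ((N : ℝ) ^ (m + 1))⁻¹ := by
  rcases N.eq_zero_or_pos with rfl | hN
  · obtain rfl : m = 0 := by omega
    simp
  have hD : (0 : ℝ) < N.descFactorial m := by exact_mod_cast Nat.descFactorial_pos.mpr h
  have hNm : (0 : ℝ) < (N : ℝ) ^ m := by positivity
  have hDle : (N.descFactorial m : ℝ) ≤ (N : ℝ) ^ m := by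
    exact_mod_cast N.descFactorial_le_pow m
  have hA : (N : ℝ) ^ m ≤ m ^ m * N.descFactorial m := by
    exact_mod_cast Nat.pow_le_pow_mul_descFactorial h
  have hB : (N : ℝ) * N ^ m ≤ N * N.descFactorial m + m ^ 2 * N ^ m := by
    exact_mod_cast Nat.mul_pow_le_mul_descFactorial_add h
  rw [abs_of_nonneg (sub_nonneg.mpr (inv_anti₀ hD hDle)), inv_sub_inv hD.ne' hNm.ne',
    ← div_eq_mul_inv, div_le_div_iff₀ (by positivity) (by positivity)]
  calc ((N : ℝ) ^ m - N.descFactorial m) * (N : ℝ) ^ (m + 1)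
      = (N * N ^ m - N * N.descFactorial m) * N ^ m := by ring
    _ ≤ m ^ 2 * N ^ m * N ^ m := by gcongr; linarith
    _ ≤ m ^ 2 * (m ^ m * N.descFactorial m) * N ^ m := by gcongr
    _ = m ^ (m + 2) * (N.descFactorial m * N ^ m) := by ring

theorem inv_descFactorial_le_of_lt {m n N : ℕ} (hmn : m < n) (hn : n ≤ N) :
    ((N.descFactorial n : ℝ))⁻¹ ≤ n ^ n * ((N : ℝ) ^ (m + 1))⁻¹ := by
  have hD : (0 : ℝ) < N.descFactorial n := by exact_mod_cast Nat.descFactorial_pos.mpr hn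
  have hN : (1 : ℝ) ≤ N := by exact_mod_cast (show 1 ≤ N by omega)
  rw [← div_eq_mul_inv, inv_eq_one_div, div_le_div_iff₀ hD (by positivity), one_mul]
  calc (N : ℝ) ^ (m + 1) ≤ N ^ n := pow_le_pow_right₀ hN hmn
    _ ≤ n ^ n * N.descFactorial n := by exact_mod_cast Nat.pow_le_pow_mul_descFactorial hn

theorem abs_sum_div_descFactorial_sub_le {ι : Type*} (s : Finset ι) (c : ι → ℝ) (b : ι → ℕ)
    {i₀ : ι} (hi₀ : i₀ ∈ s) (hmin : ∀ i ∈ s, i ≠ i₀ → b i₀ < b i) {N : ℕ}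
    (hN : ∀ i ∈ s, b i ≤ N) :
    |∑ i ∈ s, c i / (N.descFactorial (b i) : ℝ) - c i₀ * ((N : ℝ) ^ b i₀)⁻¹|
      ≤ (∑ i ∈ s, |c i| * b i ^ (b i + 2)) * ((N : ℝ) ^ (b i₀ + 1))⁻¹ := by
  classical
  set E := ((N : ℝ) ^ (b i₀ + 1))⁻¹
  have hlead : |c i₀ / (N.descFactorial (b i₀) : ℝ) - c i₀ * ((N : ℝ) ^ b i₀)⁻¹|
      ≤ |c i₀| * b i₀ ^ (b i₀ + 2) * E := by
    rw [div_eq_mul_inv, ← mul_sub, abs_mul, mul_assoc]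
    gcongr
    exact abs_inv_descFactorial_sub_inv_pow_le (hN i₀ hi₀)
  have htail : ∀ i ∈ s.erase i₀,
      |c i / (N.descFactorial (b i) : ℝ)| ≤ |c i| * b i ^ (b i + 2) * E := by
    intro i hi
    obtain ⟨hne, hi⟩ := mem_erase.mp hi
    have hlt := hmin i hi hne
    rw [abs_div, Nat.abs_cast, div_eq_mul_inv, mul_assoc]
    gcongr
    calc ((N.descFactorial (b i) : ℝ))⁻¹ ≤ b i ^ b i * E :=
          inv_descFactorial_le_of_lt hlt (hN i hi)
      _ ≤ b i ^ (b i + 2) * E := by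
          gcongr
          · exact_mod_cast (show 1 ≤ b i by omega)
          · omega
  rw [← add_sum_erase s (fun i => c i / (N.descFactorial (b i) : ℝ)) hi₀,
    ← add_sum_erase s (fun i => |c i| * b i ^ (b i + 2)) hi₀, add_mul, sum_mul]
  calc _ = |(c i₀ / (N.descFactorial (b i₀) : ℝ) - c i₀ * ((N : ℝ) ^ b i₀)⁻¹)
        + ∑ i ∈ s.erase i₀, c i / (N.descFactorial (b i) : ℝ)| := by ring_nf
    _ ≤ _ := (abs_add_le _ _).trans
        (add_le_add hlead ((abs_sum_le_sum_abs _ _).trans (sum_le_sum htail)))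

theorem tendsto_pow_mul_of_abs_sub_le {f : ℕ → ℝ} {A C : ℝ} {m N₀ : ℕ}
    (h : ∀ N, N₀ ≤ N → |f N - A * ((N : ℝ) ^ m)⁻¹| ≤ C * ((N : ℝ) ^ (m + 1))⁻¹) :
    Tendsto (fun N : ℕ => (N : ℝ) ^ m * f N) atTop (𝓝 A) := by
  have hC : Tendsto (fun N : ℕ => C * (N : ℝ)⁻¹) atTop (𝓝 0) := by
    simpa using (tendsto_inv_atTop_zero.comp tendsto_natCast_atTop_atTop).const_mul C
  refine tendsto_sub_nhds_zero_iff.mp (squeeze_zero_norm' ?_ hC)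
  filter_upwards [eventually_ge_atTop (max N₀ 1)] with N hN
  have hNm : (0 : ℝ) < (N : ℝ) ^ m := by
    have : (1 : ℝ) ≤ N := by exact_mod_cast le_of_max_le_right hN
    positivity
  calc ‖(N : ℝ) ^ m * f N - A‖ = (N : ℝ) ^ m * |f N - A * ((N : ℝ) ^ m)⁻¹| := by
        rw [Real.norm_eq_abs, ← abs_of_pos hNm, ← abs_mul, abs_of_pos hNm, mul_sub,
          mul_left_comm, mul_inv_cancel₀ hNm.ne', mul_one]
    _ ≤ (N : ℝ) ^ m * (C * ((N : ℝ) ^ (m + 1))⁻¹) := by gcongr; exact h N (le_of_max_le_left hN)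
    _ = C * (N : ℝ)⁻¹ := by rw [pow_succ]; field_simp

namespace WgPerm

instance {α : Type*} [Finite α] : Finite (Setoid α) :=
  Finite.of_injective (fun s : Setoid α => ⇑s) fun _ _ => Setoid.eq_iff_rel_eq.mpr

theorem numBlocks_le_card {α : Type*} [Finite α] (π : Setoid α) : numBlocks π ≤ Nat.card α :=
  Nat.card_le_card_of_surjective _ Quotient.mk_surjective

theorem numBlocks_lt_of_lt {α : Type*} [Finite α] {π ρ : Setoid α} (h : π < ρ) :
    numBlocks ρ < numBlocks π := by
  have hsurj : Function.Surjective (Setoid.map_of_le h.le) := by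
    rintro ⟨a⟩
    exact ⟨Quotient.mk π a, rfl⟩
  by_contra! hle
  have hinj := (hsurj.bijective_of_nat_card_le hle).injective
  exact h.not_ge fun a b hab => Quotient.exact (@hinj ⟦a⟧ ⟦b⟧ (Quotient.sound hab))

theorem Wg_eq_sum (k N : ℕ) (σ τ : Setoid (Fin k)) :
    Wg k N σ τ = ∑ π ∈ (Set.toFinite {π : Setoid (Fin k) | π ≤ σ ⊓ τ}).toFinset,
      ((mobius π σ * mobius π τ : ℤ) : ℝ) / (Nat.descFactorial N (numBlocks π) : ℝ) :=
  finsum_mem_eq_finite_toFinset_sum _ _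

theorem exists_abs_Wg_sub_le (k : ℕ) (σ τ : Setoid (Fin k)) :
    ∃ C : ℝ, ∀ N : ℕ, k ≤ N →
      |Wg k N σ τ - ((mobius (σ ⊓ τ) σ * mobius (σ ⊓ τ) τ : ℤ) : ℝ) *
          ((N : ℝ) ^ numBlocks (σ ⊓ τ))⁻¹|
        ≤ C * ((N : ℝ) ^ (numBlocks (σ ⊓ τ) + 1))⁻¹ := by
  refine ⟨∑ π ∈ (Set.toFinite {π : Setoid (Fin k) | π ≤ σ ⊓ τ}).toFinset,
      |((mobius π σ * mobius π τ : ℤ) : ℝ)| * numBlocks π ^ (numBlocks π + 2), fun N hN => ?_⟩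
  rw [Wg_eq_sum]
  refine abs_sum_div_descFactorial_sub_le _ _ _ (by simp) (fun π hπ hne => ?_) fun π _ => ?_
  · exact numBlocks_lt_of_lt (lt_of_le_of_ne (by simpa using hπ) hne)
  · simpa using (numBlocks_le_card π).trans (by simpa using hN)

theorem stmt3_general (k : ℕ) (σ τ : Setoid (Fin k)) :
    (∃ C : ℝ, 0 < C ∧ ∀ N : ℕ, k ≤ N →
        |Wg k N σ τ -
            ((mobius (σ ⊓ τ) σ * mobius (σ ⊓ τ) τ : ℤ) : ℝ) *
              ((N : ℝ) ^ numBlocks (σ ⊓ τ))⁻¹|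
          ≤ C * ((N : ℝ) ^ (numBlocks (σ ⊓ τ) + 1))⁻¹) ∧
      Filter.Tendsto
        (fun N : ℕ => (N : ℝ) ^ numBlocks (σ ⊓ τ) * Wg k N σ τ)
        Filter.atTop
        (nhds ((mobius (σ ⊓ τ) σ * mobius (σ ⊓ τ) τ : ℤ) : ℝ)) := by
  obtain ⟨C, hC⟩ := exists_abs_Wg_sub_le k σ τ
  refine ⟨⟨max C 1, lt_max_of_lt_right one_pos, fun N hN => (hC N hN).trans ?_⟩,
    tendsto_pow_mul_of_abs_sub_le hC⟩
  gcongr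
  exact le_max_left C 1

/-- asymptotics of the Weingarten function. -/
theorem stmt3 (k : ℕ) (hk : 1 ≤ k) (σ τ : Setoid (Fin k)) :
    (∃ C : ℝ, 0 < C ∧ ∀ N : ℕ, k ≤ N →
        |Wg k N σ τ -
            ((mobius (σ ⊓ τ) σ * mobius (σ ⊓ τ) τ : ℤ) : ℝ) *
              ((N : ℝ) ^ numBlocks (σ ⊓ τ))⁻¹|
          ≤ C * ((N : ℝ) ^ (numBlocks (σ ⊓ τ) + 1))⁻¹) ∧
      Filter.Tendsto
        (fun N : ℕ => (N : ℝ) ^ numBlocks (σ ⊓ τ) * Wg k N σ τ)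
        Filter.atTop
        (nhds ((mobius (σ ⊓ τ) σ * mobius (σ ⊓ τ) τ : ℤ) : ℝ)) :=
  stmt3_general k σ τ

end WgPerm

end
end

section
/- For every integer N ≥ 1, a_0(N) = 1 and a_1(N) = 0; moreover, for every integer k with 2 ≤ k ≤ N, a_k(N) > 0. -/
open Finset

noncomputable section

namespace WgPerm

/-!
Multiplied by `N^k`, `a_k(N)` is the `k`-th forward difference at `0` of `v(l) = N^l / (N)_l`
(binomial expansion of `Δ^k`). Since `(N)_{s+1} = (N - s) (N)_s`, this sequence satisfies
`N Δv(s) = s v(s+1)` for `s < N`, and Leibniz's rule turns that into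
`N Δ^{k+2} v(s) = s Δ^{k+1} v(s+1) + (k+1) Δ^k v(s+2)`. Induction on `k` then shows
`Δ^k v(s) > 0` whenever `s + k ≤ N`, except for `Δv(0) = 0`.
-/

open fwdDiff

section Recurrence

variable {f : ℕ → ℝ} {c : ℝ} {M : ℕ}

-- `c Δf` is the product of `s ↦ s` and a shift of `f`, so Leibniz's rule for `Δ^k` has only
-- two terms.
lemma mul_fwdDiff_iter_add_two_of_recurrence
    (hf : ∀ s, s + 1 ≤ M → c * Δ_[1] f s = s * f (s + 1)) :
    ∀ k s : ℕ, s + k + 2 ≤ M →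
      c * Δ_[1] ^[k + 2] f s = s * Δ_[1] ^[k + 1] f (s + 1) + (k + 1) * Δ_[1] ^[k] f (s + 2) := by
  intro k
  induction k with
  | zero =>
    intro s hs
    have h₁ := hf (s + 1) (by omega)
    have h₀ := hf s (by omega)
    simp only [Function.iterate_succ_apply', Function.iterate_zero_apply, fwdDiff] at h₀ h₁ ⊢
    push_cast at h₁ ⊢
    linear_combination h₁ - h₀
  | succ k ih =>
    intro s hs
    have h₁ := ih (s + 1) (by omega)
    have h₀ := ih s (by omega)
    simp only [Function.iterate_succ_apply', fwdDiff] at h₀ h₁ ⊢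
    push_cast at h₁ ⊢
    linear_combination h₁ - h₀

lemma fwdDiff_iter_pos_of_recurrence (hc : 0 < c) (hpos : ∀ s ≤ M, 0 < f s)
    (hf : ∀ s, s + 1 ≤ M → c * Δ_[1] f s = s * f (s + 1)) :
    ∀ k s : ℕ, s + k ≤ M → (k = 1 → 0 < s) → 0 < Δ_[1] ^[k] f s
  | 0, s, hs, _ => hpos s (by omega)
  | 1, s, hs, hs₀ => by
    have h := hf s hs
    have hs₀' : (0 : ℝ) < s := by exact_mod_cast hs₀ rfl
    have : 0 < c * Δ_[1] f s := h ▸ mul_pos hs₀' (hpos (s + 1) hs)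
    exact pos_of_mul_pos_right this hc.le
  | k + 2, s, hs, _ => by
    have h₁ := fwdDiff_iter_pos_of_recurrence hc hpos hf (k + 1) (s + 1) (by omega) (by omega)
    have h₂ := fwdDiff_iter_pos_of_recurrence hc hpos hf k (s + 2) (by omega) (by omega)
    have : 0 < c * Δ_[1] ^[k + 2] f s := by
      rw [mul_fwdDiff_iter_add_two_of_recurrence hf k s (by omega)]
      positivity
    exact pos_of_mul_pos_right this hc.le

end Recurrence

def powDivDescFactorial (N l : ℕ) : ℝ := (N : ℝ) ^ l / (N.descFactorial l : ℝ)

lemma powDivDescFactorial_pos {N l : ℕ} (hN : 0 < N) (hl : l ≤ N) :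
    0 < powDivDescFactorial N l :=
  div_pos (by positivity) (by exact_mod_cast Nat.descFactorial_pos.mpr hl)

lemma mul_fwdDiff_powDivDescFactorial {N s : ℕ} (hs : s + 1 ≤ N) :
    (N : ℝ) * Δ_[1] (powDivDescFactorial N) s = s * powDivDescFactorial N (s + 1) := by
  have hd : (N.descFactorial s : ℝ) ≠ 0 := by
    exact_mod_cast (Nat.descFactorial_pos.mpr (by omega)).ne'
  have hNs : (N : ℝ) - s ≠ 0 := by
    rw [sub_ne_zero]; exact_mod_cast (by omega : N ≠ s)
  simp only [fwdDiff, powDivDescFactorial, Nat.descFactorial_succ, Nat.cast_mul,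
    Nat.cast_sub (by omega : s ≤ N)]
  field_simp
  ring

lemma pow_mul_aSeq {k N : ℕ} (hN : N ≠ 0) :
    (N : ℝ) ^ k * aSeq k N = Δ_[1] ^[k] (powDivDescFactorial N) 0 := by
  rw [aSeq, fwdDiff_iter_eq_sum_shift, mul_sum]
  refine sum_congr rfl fun l hl => ?_
  obtain ⟨m, rfl⟩ := Nat.exists_eq_add_of_le (Nat.lt_succ_iff.mp (mem_range.mp hl))
  have hN' : (N : ℝ) ≠ 0 := by exact_mod_cast hN
  simp only [Nat.add_sub_cancel_left, zero_add, nsmul_eq_mul, mul_one, zsmul_eq_mul,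
    powDivDescFactorial, Nat.cast_id]
  rw [neg_pow, mul_inv, ← inv_pow, inv_neg, inv_one, pow_add]
  push_cast
  field_simp

theorem stmt7_general (N : ℕ) :
    aSeq 0 N = 1 ∧ aSeq 1 N = 0 ∧ ∀ k : ℕ, 2 ≤ k → k ≤ N → 0 < aSeq k N := by
  refine ⟨by simp [aSeq], by simp [aSeq, sum_range_succ], fun k hk hkN => ?_⟩
  have hN : 0 < N := by omega
  have hΔ : 0 < Δ_[1] ^[k] (powDivDescFactorial N) 0 :=
    fwdDiff_iter_pos_of_recurrence (by exact_mod_cast hN)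
      (fun s hs => powDivDescFactorial_pos hN hs)
      (fun s hs => mul_fwdDiff_powDivDescFactorial hs) k 0 (by omega) (by omega)
  rw [← pow_mul_aSeq hN.ne'] at hΔ
  exact pos_of_mul_pos_right hΔ (by positivity)

/-- first values and positivity of `a_k(N)`. -/
theorem stmt7 (N : ℕ) (hN : 1 ≤ N) :
    aSeq 0 N = 1 ∧ aSeq 1 N = 0 ∧ ∀ k : ℕ, 2 ≤ k → k ≤ N → 0 < aSeq k N :=
  stmt7_general N

end WgPerm

end
end

section
/- For all integers d, p, N with 0 ≤ d ≤ p ≤ N, one has Σ_{i=0}^{p−d} binom(p−d,i)·N^{−i}·a_{p−i}(N) = Σ_{i=0}^{d} binom(d,i)·((N−p+i)!/N!)·(−N)^{−i}. -/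
open Finset

noncomputable section

namespace WgPerm

/-!
Let `L` be the linear functional on `ℝ[X]` with `L (X ^ l) = 1 / (N)_l`. By the binomial theorem
`a_k(N) = L ((X - 1/N) ^ k)`, so the left-hand side is, again by the binomial theorem,
`L ((X - 1/N) ^ d * (1/N + (X - 1/N)) ^ (p - d)) = L ((X - 1/N) ^ d * X ^ (p - d))`,
and expanding `(X - 1/N) ^ d` gives the right-hand side.
-/

open Polynomial

section Umbral

variable {R : Type*} [CommSemiring R]

def umbral (y : ℕ → R) : R[X] →ₗ[R] R :=
  lsum fun n => y n • LinearMap.id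

theorem umbral_C_mul_X_pow (y : ℕ → R) (a : R) (n : ℕ) :
    umbral y (C a * X ^ n) = a * y n := by
  rw [C_mul_X_pow_eq_monomial, umbral, lsum_apply, sum_monomial_index _ _ (by simp)]
  simp [mul_comm]

theorem umbral_X_add_C_pow (y : ℕ → R) (c : R) (k : ℕ) :
    umbral y ((X + C c) ^ k) = ∑ l ∈ range (k + 1), (k.choose l : R) * c ^ (k - l) * y l := by
  rw [add_pow, map_sum]
  refine sum_congr rfl fun l _ => ?_
  rw [show X ^ l * C c ^ (k - l) * (k.choose l : R[X]) = C ((k.choose l : R) * c ^ (k - l)) * X ^ l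
    by simp only [C_mul, C_pow, C_eq_natCast]; ring, umbral_C_mul_X_pow]

theorem umbral_C_add_X_pow_mul_X_pow (y : ℕ → R) (c : R) (k m : ℕ) :
    umbral y ((C c + X) ^ k * X ^ m) =
      ∑ i ∈ range (k + 1), (k.choose i : R) * c ^ i * y (k - i + m) := by
  rw [add_pow, sum_mul, map_sum]
  refine sum_congr rfl fun i _ => ?_
  rw [show C c ^ i * X ^ (k - i) * (k.choose i : R[X]) * X ^ m =
      C ((k.choose i : R) * c ^ i) * X ^ (k - i + m)
    by simp only [C_mul, C_pow, C_eq_natCast]; ring, umbral_C_mul_X_pow]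

end Umbral

theorem map_pow_mul_C_add_pow {R M : Type*} [CommSemiring R] [AddCommMonoid M] [Module R M]
    (L : R[X] →ₗ[R] M) (Q : R[X]) (c : R) (d m : ℕ) :
    L (Q ^ d * (C c + Q) ^ m) =
      ∑ i ∈ range (m + 1), ((m.choose i : R) * c ^ i) • L (Q ^ (d + (m - i))) := by
  rw [add_pow, mul_sum, map_sum]
  refine sum_congr rfl fun i _ => ?_
  rw [show Q ^ d * (C c ^ i * Q ^ (m - i) * (m.choose i : R[X])) =
      C ((m.choose i : R) * c ^ i) * Q ^ (d + (m - i))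
    by simp only [C_mul, C_pow, C_eq_natCast]; ring, ← smul_eq_C_mul, map_smul]

theorem inv_descFactorial_eq_factorial_div {n k : ℕ} (h : k ≤ n) :
    ((n.descFactorial k : ℝ))⁻¹ = ((n - k).factorial : ℝ) / n.factorial := by
  rw [← Nat.factorial_mul_descFactorial h, Nat.cast_mul, div_mul_cancel_left₀ (by positivity)]

theorem aSeq_eq_umbral (k N : ℕ) :
    aSeq k N = umbral (fun l => ((N.descFactorial l : ℝ))⁻¹) ((X + C (-(N : ℝ)⁻¹)) ^ k) := by
  rw [aSeq, umbral_X_add_C_pow]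
  refine sum_congr rfl fun l _ => ?_
  rw [← inv_pow, inv_neg, div_eq_mul_inv]

/-- the key binomial identity relating the two formulas for `W̊g`. -/
theorem stmt12 (d p N : ℕ) (hdp : d ≤ p) (hpN : p ≤ N) :
    ∑ i ∈ Finset.range (p - d + 1),
        ((p - d).choose i : ℝ) * ((N : ℝ) ^ i)⁻¹ * aSeq (p - i) N =
      ∑ i ∈ Finset.range (d + 1),
        (d.choose i : ℝ) * ((Nat.factorial (N - p + i) : ℝ) / (Nat.factorial N : ℝ)) *
          ((-(N : ℝ)) ^ i)⁻¹ := by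
  obtain ⟨m, rfl⟩ := Nat.exists_eq_add_of_le hdp
  set L := umbral fun l => ((N.descFactorial l : ℝ))⁻¹
  set Q : ℝ[X] := X + C (-(N : ℝ)⁻¹)
  calc _ = L (Q ^ d * (C (N : ℝ)⁻¹ + Q) ^ m) := by
        rw [map_pow_mul_C_add_pow, Nat.add_sub_cancel_left]
        refine sum_congr rfl fun i _ => ?_
        rw [aSeq_eq_umbral, ← inv_pow, smul_eq_mul, show d + m - i = d + (m - i) by grind]
    _ = L ((C (-(N : ℝ)⁻¹) + X) ^ d * X ^ m) := by
        congr 3 <;> simp only [Q, C_neg] <;> ring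
    _ = _ := by
        rw [umbral_C_add_X_pow_mul_X_pow]
        refine sum_congr rfl fun i _ => ?_
        rw [inv_descFactorial_eq_factorial_div (by grind), ← inv_pow, inv_neg,
          show N - (d - i + m) = N - (d + m) + i by grind]
        ring

end WgPerm

end
end

section
/- For all integers 1 ≤ k ≤ N and every integer p ≥ 1, one has (1/N!)·Σ_{g∈S_N} ∏_{m=1}^{k} (g_{mm} − 1/N)^p = Σ_{l=0}^{k} binom(k,l)·α_p^l·β_p^{k−l}·a_l(N), where α_p = ((N−1)/N)^p − (−1/N)^p and β_p = (1/N)·((N−1)/N)^p + ((N−1)/N)·(−1/N)^p. -/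
/-!
A diagonal entry `x` of a permutation matrix is `0` or `1`, so `(x - 1/N)^p` coincides with the
affine function `α_p (x - 1/N) + β_p`. Expanding the product of these affine functions over the
subsets `t` of the `k` indices reduces the `p`-th moments to the first moments
`∏_{m ∈ t} (g_{mm} - 1/N)`; expanding these once more, their average depends only on `|t|` and is
`a_{|t|}(N)`, because exactly `(N - |t|)!` permutations fix `t` pointwise.
-/

open Finset

noncomputable section

namespace WgPerm

theorem _root_.Equiv.Perm.card_subtype_forall_mem_apply_eq {α : Type*} [Finite α]
    (u : Finset α) :
    Nat.card {g : Equiv.Perm α // ∀ a ∈ u, g a = a} = (Nat.card α - #u).factorial := by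
  classical
  have := Fintype.ofFinite α
  have e : Equiv.Perm {a // a ∉ u} ≃ {g : Equiv.Perm α // ∀ a ∈ u, g a = a} :=
    (Equiv.Perm.subtypeEquivSubtypePerm (· ∉ u)).trans <| Equiv.subtypeEquivRight fun g =>
      ⟨fun h a ha => h a (not_not.mpr ha), fun h a ha => h a (not_not.mp ha)⟩
  rw [← Nat.card_congr e, Nat.card_perm, Nat.card_eq_fintype_card, Fintype.card_subtype_compl,
    Fintype.card_coe, Nat.card_eq_fintype_card]

theorem _root_.Finset.prod_mul_add_eq_sum_powerset {ι R : Type*} [CommSemiring R]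
    (s : Finset ι) (x : ι → R) (a b : R) :
    ∏ i ∈ s, (a * x i + b) = ∑ t ∈ s.powerset, a ^ #t * b ^ (#s - #t) * ∏ i ∈ t, x i := by
  classical
  rw [prod_add]
  refine sum_congr rfl fun t ht => ?_
  rw [prod_mul_distrib, prod_const, prod_const, card_sdiff_of_subset (mem_powerset.mp ht)]
  ring

theorem _root_.sub_pow_eq_mul_sub_add_of_eq_zero_or_eq_one {R : Type*} [CommRing R] {e : R}
    (he : e = 0 ∨ e = 1) (c : R) (p : ℕ) :
    (e - c) ^ p =
      ((1 - c) ^ p - (-c) ^ p) * (e - c) + (c * (1 - c) ^ p + (1 - c) * (-c) ^ p) := by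
  rcases he with rfl | rfl <;> ring

theorem permEntry_eq_zero_or_eq_one {N : ℕ} (g : Equiv.Perm (Fin N)) (i j : Fin N) :
    permEntry g i j = 0 ∨ permEntry g i j = 1 := by
  unfold permEntry
  split_ifs <;> simp

theorem sum_prod_permEntry_diag {N : ℕ} (u : Finset (Fin N)) :
    ∑ g : Equiv.Perm (Fin N), ∏ i ∈ u, permEntry g i i = ((N - #u).factorial : ℝ) := by
  have h : ∀ g : Equiv.Perm (Fin N),
      ∏ i ∈ u, permEntry g i i = if ∀ i ∈ u, g i = i then 1 else 0 := fun g => by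
    simp [permEntry, prod_boole]
  rw [sum_congr rfl fun g _ => h g, sum_boole, ← Fintype.card_subtype, ← Nat.card_eq_fintype_card,
    Equiv.Perm.card_subtype_forall_mem_apply_eq, Nat.card_fin]

theorem average_prod_permEntry_diag_sub {N : ℕ} (u : Finset (Fin N)) :
    1 / (N.factorial : ℝ) * ∑ g : Equiv.Perm (Fin N), ∏ i ∈ u, (permEntry g i i - 1 / (N : ℝ)) =
      aSeq #u N := by
  have hu : #u ≤ N := by simpa using card_le_univ u
  have hN : (N.factorial : ℝ) ≠ 0 := by positivity
  have hterm : ∀ t ∈ u.powerset, 1 / (N.factorial : ℝ) *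
      ∑ g : Equiv.Perm (Fin N), (-(1 / (N : ℝ))) ^ (#u - #t) * ∏ i ∈ t, permEntry g i i =
        (-(1 / (N : ℝ))) ^ (#u - #t) / N.descFactorial #t := by
    intro t ht
    have ht : #t ≤ N := (card_le_card (mem_powerset.mp ht)).trans hu
    have hfac : ((N - #t).factorial : ℝ) * N.descFactorial #t = N.factorial := by
      exact_mod_cast Nat.factorial_mul_descFactorial ht
    have hdesc : (N.descFactorial #t : ℝ) ≠ 0 := by
      exact_mod_cast (Nat.descFactorial_pos.mpr ht).ne'
    rw [← mul_sum, sum_prod_permEntry_diag]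
    field_simp
    linear_combination (-(1 / (N : ℝ))) ^ (#u - #t) * hfac
  have hexpand : ∀ g : Equiv.Perm (Fin N), ∏ i ∈ u, (permEntry g i i - 1 / (N : ℝ)) =
      ∑ t ∈ u.powerset, (-(1 / (N : ℝ))) ^ (#u - #t) * ∏ i ∈ t, permEntry g i i := fun g => by
    simpa only [one_mul, one_pow, ← sub_eq_add_neg] using
      prod_mul_add_eq_sum_powerset u (fun i => permEntry g i i) 1 (-(1 / (N : ℝ)))
  simp_rw [hexpand]
  rw [sum_comm, mul_sum, sum_congr rfl hterm,
    sum_powerset_apply_card fun l => (-(1 / (N : ℝ))) ^ (#u - l) / N.descFactorial l]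
  refine sum_congr rfl fun l _ => ?_
  rw [nsmul_eq_mul, one_div, neg_inv, inv_pow]
  ring

def alphaP (N p : ℕ) : ℝ := (((N : ℝ) - 1) / (N : ℝ)) ^ p - (-(1 / (N : ℝ))) ^ p

def betaP (N p : ℕ) : ℝ :=
  1 / (N : ℝ) * (((N : ℝ) - 1) / (N : ℝ)) ^ p + ((N : ℝ) - 1) / (N : ℝ) * (-(1 / (N : ℝ))) ^ p

theorem permEntry_diag_sub_pow {N : ℕ} (g : Equiv.Perm (Fin N)) (i : Fin N) (p : ℕ) :
    (permEntry g i i - 1 / (N : ℝ)) ^ p =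
      alphaP N p * (permEntry g i i - 1 / (N : ℝ)) + betaP N p := by
  have hN : (N : ℝ) ≠ 0 := Nat.cast_ne_zero.mpr i.pos.ne'
  have h : ((N : ℝ) - 1) / N = 1 - 1 / N := by field_simp
  rw [alphaP, betaP, h]
  exact sub_pow_eq_mul_sub_add_of_eq_zero_or_eq_one (permEntry_eq_zero_or_eq_one g i i) _ p

theorem average_prod_permEntry_diag_sub_pow {N : ℕ} (u : Finset (Fin N)) (p : ℕ) :
    1 / (N.factorial : ℝ) *
        ∑ g : Equiv.Perm (Fin N), ∏ i ∈ u, (permEntry g i i - 1 / (N : ℝ)) ^ p =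
      ∑ l ∈ range (#u + 1),
        ((#u).choose l : ℝ) * alphaP N p ^ l * betaP N p ^ (#u - l) * aSeq l N := by
  have hexpand : ∀ g : Equiv.Perm (Fin N), ∏ i ∈ u, (permEntry g i i - 1 / (N : ℝ)) ^ p =
      ∑ t ∈ u.powerset, alphaP N p ^ #t * betaP N p ^ (#u - #t) *
        ∏ i ∈ t, (permEntry g i i - 1 / (N : ℝ)) := fun g => by
    simp_rw [permEntry_diag_sub_pow g _ p]
    exact prod_mul_add_eq_sum_powerset u _ _ _
  have hterm : ∀ t ∈ u.powerset, 1 / (N.factorial : ℝ) * ∑ g : Equiv.Perm (Fin N),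
      alphaP N p ^ #t * betaP N p ^ (#u - #t) * ∏ i ∈ t, (permEntry g i i - 1 / (N : ℝ)) =
        alphaP N p ^ #t * betaP N p ^ (#u - #t) * aSeq #t N := fun t _ => by
    rw [← mul_sum, mul_left_comm, average_prod_permEntry_diag_sub]
  simp_rw [hexpand]
  rw [sum_comm, mul_sum, sum_congr rfl hterm,
    sum_powerset_apply_card fun l => alphaP N p ^ l * betaP N p ^ (#u - l) * aSeq l N]
  simp_rw [nsmul_eq_mul, mul_assoc]

theorem stmt18_general (k N p : ℕ) (hN : k ≤ N) :
    (1 / (Nat.factorial N : ℝ)) *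
        ∑ g : Equiv.Perm (Fin N),
          ∏ m : Fin k,
            (permEntry g (Fin.castLE hN m) (Fin.castLE hN m) - 1 / (N : ℝ)) ^ p =
      ∑ l ∈ Finset.range (k + 1),
        (k.choose l : ℝ) *
          ((((N : ℝ) - 1) / (N : ℝ)) ^ p - (-(1 / (N : ℝ))) ^ p) ^ l *
          (1 / (N : ℝ) * (((N : ℝ) - 1) / (N : ℝ)) ^ p +
            ((N : ℝ) - 1) / (N : ℝ) * (-(1 / (N : ℝ))) ^ p) ^ (k - l) *
          aSeq l N := by
  have h := average_prod_permEntry_diag_sub_pow (univ.map (Fin.castLEEmb hN)) p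
  simp_rw [prod_map, card_map, card_univ, Fintype.card_fin] at h
  exact h

/-- `p`-th centered diagonal moments in terms of `a_l(N)`. -/
theorem stmt18 (k N p : ℕ) (hk : 1 ≤ k) (hN : k ≤ N) (hp : 1 ≤ p) :
    (1 / (Nat.factorial N : ℝ)) *
        ∑ g : Equiv.Perm (Fin N),
          ∏ m : Fin k,
            (permEntry g (Fin.castLE hN m) (Fin.castLE hN m) - 1 / (N : ℝ)) ^ p =
      ∑ l ∈ Finset.range (k + 1),
        (k.choose l : ℝ) *
          ((((N : ℝ) - 1) / (N : ℝ)) ^ p - (-(1 / (N : ℝ))) ^ p) ^ l *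
          (1 / (N : ℝ) * (((N : ℝ) - 1) / (N : ℝ)) ^ p +
            ((N : ℝ) - 1) / (N : ℝ) * (-(1 / (N : ℝ))) ^ p) ^ (k - l) *
          aSeq l N :=
  stmt18_general k N p hN

end WgPerm

end
end

section
/- For all integers 2 ≤ k ≤ N, the centered Weingarten function at the maximal partition satisfies the lower bound W̊g_k(1_k, 1_k, N) ≥ 1/N + (2^{k−1} − 1)/N². -/
/-!
At `σ = τ = 1_k` with `k ≥ 2` there are no singletons, so the centered Weingarten function is the
plain one, `Σ_π μ(π, 1_k)² / (N)_{#π}`, a sum of nonnegative terms. Keeping only `π = 1_k`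
(contributing `1/N`) and the `2^{k-1} - 1` two-block partitions (each contributing
`1/(N(N-1)) ≥ 1/N²`) gives the bound.
-/

open Finset

noncomputable section

namespace WgPerm

instance inst_s19 {α : Type*} [Finite α] : Finite (Setoid α) :=
  Finite.of_injective (fun s : Setoid α => (s : α → α → Prop)) fun _ _ h =>
    Setoid.ext fun x y => iff_of_eq (congrFun₂ h x y)

instance {α : Type*} [Finite α] : Fintype (Setoid α) := Fintype.ofFinite _

section top

variable {α : Type*} [Nonempty α]

instance : Unique (Quotient (⊤ : Setoid α)) where
  default := ⟦Classical.arbitrary α⟧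
  uniq a := Quotient.inductionOn a fun _ => Quotient.sound trivial

lemma numBlocks_top : numBlocks (⊤ : Setoid α) = 1 :=
  Nat.card_unique

lemma mobius_top (π : Setoid α) :
    mobius π ⊤ = (-1 : ℤ) ^ (numBlocks π - 1) * ((numBlocks π - 1).factorial : ℤ) := by
  have hlam : lam π ⊤ default = numBlocks π :=
    Nat.card_congr (Equiv.subtypeUnivEquiv fun _ => Subsingleton.elim _ _)
  rw [mobius, finprod_unique, hlam]

end top

lemma numSingletons_top {k : ℕ} (hk : 2 ≤ k) : numSingletons (⊤ : Setoid (Fin k)) = 0 := by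
  have : Nontrivial (Fin k) := Fin.nontrivial_iff_two_le.mpr hk
  have : IsEmpty {j : Fin k | ∀ m, (⊤ : Setoid (Fin k)).r j m → m = j} :=
    ⟨fun ⟨j, hj⟩ => (exists_ne j).elim fun m hm => hm (hj m trivial)⟩
  exact Nat.card_of_isEmpty

lemma cWg_eq_Wg {k N : ℕ} {σ τ : Setoid (Fin k)} (h : numSingletons (σ ⊔ τ) = 0) :
    cWg k N σ τ = Wg k N σ τ := by
  simp [cWg, Wg, h]

lemma Wg_top_top (k N : ℕ) [NeZero k] :
    Wg k N ⊤ ⊤ = ∑ π : Setoid (Fin k),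
      ((numBlocks π - 1).factorial : ℝ) ^ 2 / N.descFactorial (numBlocks π) := by
  simp only [Wg, inf_idem, le_top, Set.ofPred_true, finsum_eq_sum_of_fintype,
    Set.mem_univ, finsum_true, mobius_top]
  congr! 2
  push_cast
  rw [mul_mul_mul_comm, ← pow_add, Even.neg_one_pow ⟨_, rfl⟩, one_mul, sq]

section twoBlocks

variable {α : Type*}

def twoBlocks (S : Finset α) : Setoid α := Setoid.ker (· ∈ S)

lemma twoBlocks_apply {S : Finset α} {x y : α} : twoBlocks S x y ↔ (x ∈ S ↔ y ∈ S) :=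
  Setoid.ker_def.trans eq_iff_iff

lemma numBlocks_twoBlocks {S : Finset α} {a b : α} (ha : a ∉ S) (hb : b ∈ S) :
    numBlocks (twoBlocks S) = 2 := by
  have hsurj : Function.Surjective (· ∈ S) := fun p => by
    by_cases hp : p
    · exact ⟨b, by simp [hb, hp]⟩
    · exact ⟨a, by simp [ha, hp]⟩
  rw [numBlocks, twoBlocks, Nat.card_congr (Setoid.quotientKerEquivOfSurjective _ hsurj),
    Nat.card_eq_fintype_card, Fintype.card_prop]

lemma twoBlocks_ne_top {S : Finset α} {a b : α} (ha : a ∉ S) (hb : b ∈ S) :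
    twoBlocks S ≠ ⊤ := fun h =>
  ha (twoBlocks_apply.mp (h ▸ trivial : twoBlocks S a b) |>.mpr hb)

lemma twoBlocks_injOn (a : α) : Set.InjOn twoBlocks {S : Finset α | a ∉ S} := by
  intro S hS T hT h
  ext x
  have hx : (x ∈ S ↔ a ∈ S) ↔ (x ∈ T ↔ a ∈ T) := by
    rw [← twoBlocks_apply, ← twoBlocks_apply, h]
  tauto

end twoBlocks

lemma le_sum_comp_numBlocks {α : Type*} [Fintype α] (a : α) (f : ℕ → ℝ)
    (hf : ∀ m, 0 ≤ f m) :
    f 1 + ((2 : ℝ) ^ (Fintype.card α - 1) - 1) * f 2 ≤ ∑ π : Setoid α, f (numBlocks π) := by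
  classical
  have : Nonempty α := ⟨a⟩
  set T := (univ.erase a).powerset.erase ∅
  have hT : ∀ S ∈ T, a ∉ S ∧ S.Nonempty := fun S hS => by
    obtain ⟨hne, hsub⟩ := mem_erase.mp hS
    exact ⟨fun haS => (mem_erase.mp (mem_powerset.mp hsub haS)).1 rfl,
      nonempty_iff_ne_empty.mpr hne⟩
  have hcardT : #T = 2 ^ (Fintype.card α - 1) - 1 := by
    rw [card_erase_of_mem (empty_mem_powerset _), card_powerset,
      card_erase_of_mem (mem_univ a), card_univ]
  have htop : ⊤ ∉ T.image twoBlocks := by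
    simp only [mem_image, not_exists, not_and]
    intro S hS
    obtain ⟨ha, b, hb⟩ := hT S hS
    exact twoBlocks_ne_top ha hb
  calc f 1 + ((2 : ℝ) ^ (Fintype.card α - 1) - 1) * f 2
      = ∑ π ∈ insert ⊤ (T.image twoBlocks), f (numBlocks π) := by
        rw [sum_insert htop,
          sum_image fun S hS S' hS' => twoBlocks_injOn a (hT S hS).1 (hT S' hS').1, numBlocks_top, sum_congr rfl fun S hS => by
            obtain ⟨ha, b, hb⟩ := hT S hS
            rw [numBlocks_twoBlocks ha hb],
          sum_const, hcardT, nsmul_eq_mul, Nat.cast_sub Nat.one_le_two_pow]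
        push_cast
        ring
    _ ≤ ∑ π, f (numBlocks π) :=
        sum_le_sum_of_subset_of_nonneg (subset_univ _) fun π _ _ => hf _

lemma le_Wg_top_top {k N : ℕ} [NeZero k] (hN : 2 ≤ N) :
    1 / (N : ℝ) + ((2 : ℝ) ^ (k - 1) - 1) / (N : ℝ) ^ 2 ≤ Wg k N ⊤ ⊤ := by
  have hpos : (0 : ℝ) < N.descFactorial 2 := by exact_mod_cast Nat.descFactorial_pos.mpr hN
  have hle : (N.descFactorial 2 : ℝ) ≤ (N : ℝ) ^ 2 := by
    exact_mod_cast Nat.descFactorial_le_pow N 2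
  rw [Wg_top_top]
  refine le_trans ?_ (le_sum_comp_numBlocks (0 : Fin k)
    (fun m => ((m - 1).factorial : ℝ) ^ 2 / N.descFactorial m) fun m => by positivity)
  simp only [Fintype.card_fin, Nat.sub_self, Nat.factorial_zero, Nat.descFactorial_one,
    Nat.cast_one, one_pow, Nat.add_one_sub_one, Nat.factorial_one, mul_one_div]
  gcongr
  exact sub_nonneg.mpr (one_le_pow₀ one_le_two)

/-- lower bound for the centered Weingarten function at the maximal partition. -/
theorem stmt19 (k N : ℕ) (h2 : 2 ≤ k) (hkN : k ≤ N) :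
    1 / (N : ℝ) + ((2 : ℝ) ^ (k - 1) - 1) / (N : ℝ) ^ 2 ≤
      cWg k N (⊤ : Setoid (Fin k)) (⊤ : Setoid (Fin k)) := by
  have : NeZero k := ⟨by omega⟩
  rw [cWg_eq_Wg (by rw [sup_idem]; exact numSingletons_top h2)]
  exact le_Wg_top_top (h2.trans hkN)

end WgPerm
end
end
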